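/- arXiv:1908.06680 — 6 statements merged into one kernel-verified Lean document; each statement's English description precedes it below -/
import Mathlib

section
/- With $D_t = \{(g_x)_{x\in\mathbb{F}_p} \in \prod_{x\in\mathbb{F}_p} C_{l^t} : \prod_x g_x = 1\}$ and the translation action of $\mathbb{F}_p$ on the index set, the only $\mathbb{F}_p$-stable irreducible character of $D_t$ is the trivial character. -/
/-- second claim of Lemma 3.2.
Let `l ≠ p` be primes, `t ≥ 1`.  Realise `D_t`, the "product-one" (here:
sum-zero) subgroup of `Ω_t = ∏_{x ∈ 𝔽_p} C_{l^t}`, additively as the group of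
functions `g : ZMod p → ZMod (l^t)` with `∑ x, g x = 0`; the additive group
`𝔽_p` acts by translating indices.  If an irreducible (i.e. `ℂ`-valued
additive) character `θ` of `D_t` is `𝔽_p`-stable, then `θ` is trivial: the
only `𝔽_p`-stable irreducible character of `D_t` is the trivial one. -/
theorem stmt_3
    (l p t : ℕ) (hl : l.Prime) (hp : p.Prime) [NeZero p] (hlp : l ≠ p)
    (ht : 0 < t)
    (D : AddSubgroup (ZMod p → ZMod (l ^ t)))
    (hD : D = {g : ZMod p → ZMod (l ^ t) | (∑ x, g x) = 0})
    (θ : AddChar D ℂ)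
    (hstable : ∀ (y : ZMod p) (g : ZMod p → ZMod (l ^ t)) (hg : g ∈ D)
        (hg' : (fun x => g (x - y)) ∈ D),
        θ ⟨fun x => g (x - y), hg'⟩ = θ ⟨g, hg⟩) :
    ∀ g : D, θ g = 1 := by
  have hmem : ∀ f : ZMod p → ZMod (l ^ t), f ∈ D ↔ (∑ x, f x) = 0 := by
    intro f
    rw [← SetLike.mem_coe, hD]
    rfl
  rintro ⟨g, hg⟩
  have hg0 : ∑ x, g x = 0 := (hmem g).mp hg
  have htr : ∀ y : ZMod p, (fun x => g (x - y)) ∈ D := by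
    intro y
    rw [hmem]
    rw [← hg0]
    exact Fintype.sum_equiv (Equiv.subRight y) _ _ (fun x => rfl)
  -- sum of translates is 0
  have hsum : (∑ y : ZMod p, (⟨fun x => g (x - y), htr y⟩ : D)) = 0 := by
    ext x
    push_cast
    rw [Finset.sum_apply]
    show (∑ y : ZMod p, g (x - y)) = 0
    rw [← hg0]
    exact Fintype.sum_equiv (Equiv.subLeft x) _ _ (fun y => rfl)
  have hp1 : θ ⟨g, hg⟩ ^ p = 1 := by
    have this : θ (∑ y : ZMod p, (⟨fun x => g (x - y), htr y⟩ : D))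
        = ∏ y : ZMod p, θ ⟨fun x => g (x - y), htr y⟩ := by
      classical
      induction (Finset.univ : Finset (ZMod p)) using Finset.cons_induction with
      | empty => simp
      | cons a s ha ih => rw [Finset.sum_cons, Finset.prod_cons, AddChar.map_add_eq_mul, ih]
    rw [hsum, AddChar.map_zero_eq_one] at this
    calc θ ⟨g, hg⟩ ^ p = ∏ y : ZMod p, θ ⟨fun x => g (x - y), htr y⟩ := by
          rw [Finset.prod_congr rfl (fun y _ => hstable y g hg (htr y))]
          simp [Finset.prod_const, Finset.card_univ, ZMod.card]
      _ = 1 := this.symm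
  have hl1 : θ ⟨g, hg⟩ ^ (l ^ t) = 1 := by
    rw [← AddChar.map_nsmul_eq_pow]
    convert AddChar.map_zero_eq_one θ using 2
    ext x
    push_cast
    show (l ^ t : ℕ) • g x = 0
    simp [nsmul_eq_mul, ZMod.natCast_self]
  have hcop : Nat.gcd p (l ^ t) = 1 :=
    (Nat.Coprime.pow_right t ((Nat.coprime_primes hp hl).mpr (Ne.symm hlp))).gcd_eq_one
  have : θ ⟨g, hg⟩ ^ Nat.gcd p (l ^ t) = 1 := by
    rw [pow_gcd_eq_one]; exact ⟨hp1, hl1⟩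
  rwa [hcop, pow_one] at this
end

section
/- Let $F = \mathbb{F}_p \rtimes \mathbb{F}_p^{\times}$ (affine group of the line over $\mathbb{F}_p$) and let $F_{l'} = O_{l'}(F)$ be its unique largest normal subgroup whose order is coprime to $l$, where $l$ is a prime with $l \neq p$ and $p-1$ not a power of $l$. Then $F$ acts faithfully on $F_{l'}$ by conjugation, and every automorphism of $F_{l'}$ is induced by conjugation by an element of $F$; consequently $\mathrm{Aut}(F_{l'}) \cong F$. -/
/-- The action of `𝔽_p^×` on `𝔽_p` by multiplication, as multiplicative
automorphisms. -/
def phiF (p : ℕ) : (ZMod p)ˣ →* MulAut (Multiplicative (ZMod p)) where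
  toFun u := AddEquiv.toMultiplicative (DistribMulAction.toAddAut (ZMod p)ˣ (ZMod p) u)
  map_one' := by ext x; simp
  map_mul' u v := by ext x; simp [mul_smul]

/-- The affine group `F = 𝔽_p ⋊ 𝔽_p^×` of the line over `𝔽_p`. -/
abbrev Fgrp (p : ℕ) := SemidirectProduct (Multiplicative (ZMod p)) (ZMod p)ˣ (phiF p)

/-- The `l'`-part `O_{l'}(𝔽_p^×)`: the subgroup of elements of order coprime
to `l`. -/
def Ul (l p : ℕ) : Subgroup (ZMod p)ˣ where
  carrier := {u | Nat.Coprime (orderOf u) l}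
  one_mem' := by simp [Set.mem_setOf_eq, Nat.coprime_one_left]
  mul_mem' := by
    intro a b ha hb
    exact Nat.Coprime.coprime_dvd_left
      (Commute.orderOf_mul_dvd_mul_orderOf (mul_comm a b)) (Nat.Coprime.mul ha hb)
  inv_mem' := by
    intro a ha
    simpa [Set.mem_setOf_eq, orderOf_inv] using ha

/-- `F_{l'} = O_{l'}(F) = 𝔽_p ⋊ O_{l'}(𝔽_p^×)`, the preimage in `F` of
`O_{l'}(𝔽_p^×)` under the projection to `𝔽_p^×`. -/
def Flp (l p : ℕ) : Subgroup (Fgrp p) :=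
  Subgroup.comap (SemidirectProduct.rightHom : Fgrp p →* (ZMod p)ˣ) (Ul l p)

instance FlpNormal (l p : ℕ) : (Flp l p).Normal :=
  Subgroup.Normal.comap inferInstance _

namespace Stmt5Aux

open SemidirectProduct Multiplicative

lemma phiF_apply (p : ℕ) (u : (ZMod p)ˣ) (x : Multiplicative (ZMod p)) :
    phiF p u x = ofAdd ((u : ZMod p) * x.toAdd) := rfl

variable (l p : ℕ)

lemma inl_mem (n : Multiplicative (ZMod p)) : (inl n : Fgrp p) ∈ Flp l p := by
  show rightHom (inl n : Fgrp p) ∈ Ul l p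
  rw [rightHom_inl]; exact one_mem _

lemma inr_mem (u : ↥(Ul l p)) : (inr u.1 : Fgrp p) ∈ Flp l p := by
  show rightHom (inr u.1 : Fgrp p) ∈ Ul l p
  rw [rightHom_inr]; exact u.2

/-- translation by `y` as an element of `Flp`. -/
def tK (y : ZMod p) : Flp l p := ⟨inl (ofAdd y), inl_mem l p _⟩

/-- `⟨0, u⟩` as an element of `Flp`. -/
def sK (u : ↥(Ul l p)) : Flp l p := ⟨inr u.1, inr_mem l p u⟩

lemma tK_mul (y z : ZMod p) : tK l p y * tK l p z = tK l p (y + z) := by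
  apply Subtype.ext
  show (inl (ofAdd y) : Fgrp p) * inl (ofAdd z) = inl (ofAdd (y + z))
  rw [← map_mul, ← ofAdd_add]

lemma tK_pow (y : ZMod p) (n : ℕ) : (tK l p y) ^ n = tK l p (n • y) := by
  apply Subtype.ext
  show ((inl (ofAdd y) : Fgrp p)) ^ n = inl (ofAdd (n • y))
  rw [← map_pow, ← ofAdd_nsmul]

lemma sK_mul (u v : ↥(Ul l p)) : sK l p u * sK l p v = sK l p (u * v) := by
  apply Subtype.ext
  show (inr u.1 : Fgrp p) * inr v.1 = inr (u.1 * v.1)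
  rw [← map_mul]

lemma tK_one : tK l p 0 = 1 := by
  apply Subtype.ext
  show (inl (ofAdd (0 : ZMod p)) : Fgrp p) = 1
  simp

lemma tK_injective : Function.Injective (tK l p) := by
  intro a b h
  have := congrArg (fun k : Flp l p => Multiplicative.toAdd (k : Fgrp p).left) h
  simpa [tK] using this

/-- conjugation of a translation in `Fgrp`. -/
lemma conj_inl (g : Fgrp p) (n : Multiplicative (ZMod p)) :
    g * SemidirectProduct.inl n * g⁻¹ = inl (phiF p g.right n) := by
  ext
  · apply Multiplicative.toAdd.injective
    simp only [mul_left, inv_left, left_inl, mul_right, right_inl, mul_one, ← map_inv,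
      phiF_apply, toAdd_mul, toAdd_inv, toAdd_ofAdd]
    ring_nf
    simp [Units.mul_inv_cancel_left]
  · simp

/-- conjugation of a translation inside `Flp`. -/
lemma conj_tK (k : Flp l p) (y : ZMod p) :
    k * tK l p y * k⁻¹ = tK l p ((k.1.right : ZMod p) * y) := by
  apply Subtype.ext
  show k.1 * inl (ofAdd y) * k.1⁻¹ = inl (ofAdd ((k.1.right : ZMod p) * y))
  rw [conj_inl, phiF_apply, toAdd_ofAdd]

/-- decomposition of an element of `Flp`. -/
lemma decomp (k : Flp l p) :
    k = tK l p (toAdd k.1.left) * sK l p ⟨k.1.right, k.2⟩ := by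
  apply Subtype.ext
  show k.1 = inl (ofAdd (toAdd k.1.left)) * inr k.1.right
  rw [ofAdd_toAdd, inl_left_mul_inr_right]

lemma exists_unit (hl : l.Prime) (hp : p.Prime) (hlp : l ≠ p)
    (hpow : ¬ ∃ k : ℕ, p - 1 = l ^ k) :
    ∃ u : (ZMod p)ˣ, u ∈ Ul l p ∧ u ≠ 1 := by
  haveI := Fact.mk hp
  obtain ⟨q, hq, hqd, hql⟩ : ∃ q, q.Prime ∧ q ∣ p - 1 ∧ q ≠ l := by
    by_contra h
    push_neg at h
    have h1 : p - 1 ≠ 0 := by have := hp.two_le; omega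
    exact hpow ⟨_, Nat.eq_prime_pow_of_unique_prime_dvd h1 (fun hd hdv => h _ hd hdv)⟩
  haveI := Fact.mk hq
  have hcard : Fintype.card (ZMod p)ˣ = p - 1 := by
    rw [ZMod.card_units_eq_totient, Nat.totient_prime hp]
  obtain ⟨u, hu⟩ := exists_prime_orderOf_dvd_card q (hcard ▸ hqd)
  refine ⟨u, ?_, ?_⟩
  · show Nat.Coprime (orderOf u) l
    rw [hu]
    exact (Nat.coprime_primes hq hl).mpr hql
  · intro h
    rw [h, orderOf_one] at hu
    exact hq.one_lt.ne' hu.symm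

end Stmt5Aux

/-- Let `F = 𝔽_p ⋊ 𝔽_p^×` and `F_{l'} = O_{l'}(F)`, where `l ≠ p` are primes and
`p - 1` is not a power of `l`.  Then the conjugation homomorphism
`F →* Aut(F_{l'})` is bijective: `F` acts faithfully on `F_{l'}` and every
automorphism of `F_{l'}` is induced by conjugation by an element of `F`;
consequently `Aut(F_{l'}) ≅ F`. -/
theorem stmt_5 (l p : ℕ) (hl : l.Prime) (hp : p.Prime) (hlp : l ≠ p)
    (hpow : ¬ ∃ k : ℕ, p - 1 = l ^ k) :
    Function.Bijective
      (MulAut.conjNormal : Fgrp p →* MulAut (Flp l p)) := by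
  haveI := Fact.mk hp
  open Stmt5Aux SemidirectProduct Multiplicative in
  constructor
  · rw [injective_iff_map_eq_one]
    intro g hg
    have hcomm : ∀ k : Flp l p, g * (k : Fgrp p) * g⁻¹ = k := by
      intro k
      have := congrArg (fun e : MulAut (Flp l p) => ((e k : Flp l p) : Fgrp p)) hg
      simpa using this
    obtain ⟨u, huU, hune⟩ := exists_unit l p hl hp hlp hpow
    -- first: g.right = 1
    have h1 : g.right = 1 := by
      have := hcomm (tK l p 1)
      rw [show ((tK l p 1 : Flp l p) : Fgrp p) = inl (ofAdd (1 : ZMod p)) from rfl,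
        conj_inl] at this
      have := inl_injective this
      have := congrArg Multiplicative.toAdd this
      rw [phiF_apply, toAdd_ofAdd, toAdd_ofAdd, mul_one] at this
      exact Units.ext this
    -- second: g.left = 1
    have h2 : g.left = 1 := by
      have hc := hcomm (sK l p ⟨u, huU⟩)
      rw [show ((sK l p ⟨u, huU⟩ : Flp l p) : Fgrp p) = inr u from rfl] at hc
      have hleft := congrArg SemidirectProduct.left hc
      simp only [mul_left, mul_right, inv_left, inv_right, left_inr, right_inr, h1,
        map_one, MulAut.one_apply, mul_one, one_mul, ← map_inv, phiF_apply] at hleft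
      have key : ((1 : ZMod p) - (u : ZMod p)) * toAdd g.left = 0 := by
        have := congrArg Multiplicative.toAdd hleft
        simp only [toAdd_mul, toAdd_ofAdd, toAdd_inv, toAdd_one, Units.val_one, inv_one,
          one_mul] at this
        linear_combination this
      have hu1 : (1 : ZMod p) - (u : ZMod p) ≠ 0 := by
        intro h
        apply hune
        apply Units.ext
        have : ((u : ZMod p)) = 1 := by linear_combination -h
        simpa using this
      apply Multiplicative.toAdd.injective
      have := (mul_eq_zero.mp key).resolve_left hu1
      simpa using this
    ext
    · rw [h2]; rfl
    · rw [h1]; rfl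
  · intro φ
    haveI : Fintype ↥(Ul l p) := Fintype.ofFinite _
    have hcard : Fintype.card (ZMod p)ˣ = p - 1 := by
      rw [ZMod.card_units_eq_totient, Nat.totient_prime hp]
    set t1 : Flp l p := tK l p 1 with ht1
    -- `φ t1` is a translation
    have ht1p : t1 ^ p = 1 := by
      rw [ht1, tK_pow]
      simp [nsmul_eq_mul, ZMod.natCast_self, tK_one]
    have hw : ((φ t1 : Flp l p) : Fgrp p).right = 1 := by
      have hpow1 : (φ t1) ^ p = 1 := by rw [← map_pow, ht1p, map_one]
      have hr : (((φ t1 : Flp l p) : Fgrp p).right) ^ p = 1 := by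
        have h0 : ((φ t1 : Flp l p) : Fgrp p) ^ p = 1 := by
          rw [← SubmonoidClass.coe_pow, hpow1]; rfl
        have h5 := map_pow (rightHom : Fgrp p →* (ZMod p)ˣ) ((φ t1 : Flp l p) : Fgrp p) p
        rw [h0, map_one] at h5
        exact h5.symm
      have h1 : orderOf (((φ t1 : Flp l p) : Fgrp p).right) ∣ p :=
        orderOf_dvd_of_pow_eq_one hr
      have h2 : orderOf (((φ t1 : Flp l p) : Fgrp p).right) ∣ p - 1 := by
        rw [← hcard]; exact orderOf_dvd_card
      have hco : Nat.Coprime p (p - 1) := by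
        have h3 := Nat.coprime_add_self_left (m := 1) (n := p - 1)
        have h4 : 1 + (p - 1) = p := by have := hp.two_le; omega
        rw [h4] at h3
        exact h3.mpr (Nat.coprime_one_left _)
      exact orderOf_eq_one_iff.mp (Nat.dvd_one.mp (hco ▸ Nat.dvd_gcd h1 h2))
    set c : ZMod p := Multiplicative.toAdd ((φ t1 : Flp l p) : Fgrp p).left with hcdef
    have hφt1 : φ t1 = tK l p c := by
      apply Subtype.ext
      ext
      · show ((φ t1 : Flp l p) : Fgrp p).left = ofAdd c
        rw [hcdef, ofAdd_toAdd]
      · rw [hw]; rfl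
    have hc0 : c ≠ 0 := by
      intro h
      have h1 : φ t1 = 1 := by rw [hφt1, h, tK_one]
      have h2 : t1 = 1 := by
        have := φ.injective (h1.trans (map_one φ).symm)
        simpa using this
      have h3 := congrArg (fun k : Flp l p => Multiplicative.toAdd (k : Fgrp p).left) h2
      simp only [ht1] at h3
      have : (1 : ZMod p) = 0 := by simpa [tK] using h3
      exact one_ne_zero this
    have htK : ∀ y : ZMod p, φ (tK l p y) = tK l p (c * y) := by
      intro y
      have hy : tK l p y = t1 ^ y.val := by
        rw [ht1, tK_pow]
        congr 1
        simp [nsmul_eq_mul, ZMod.natCast_val, ZMod.cast_id]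
      rw [hy, map_pow, hφt1, tK_pow]
      congr 1
      simp [nsmul_eq_mul, ZMod.natCast_val, ZMod.cast_id, mul_comm]
    -- the unit component of φ (sK u) is u
    have hsr : ∀ u : ↥(Ul l p), ((φ (sK l p u) : Flp l p) : Fgrp p).right = u.1 := by
      intro u
      have hrel : sK l p u * tK l p 1 * (sK l p u)⁻¹ = tK l p ((u.1 : ZMod p)) := by
        have := conj_tK l p (sK l p u) 1
        simpa [sK] using this
      have h6 := congrArg φ hrel
      rw [map_mul, map_mul, map_inv, ← ht1, hφt1, htK, conj_tK] at h6
      have h7 := tK_injective l p h6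
      have h8 : (((φ (sK l p u) : Flp l p) : Fgrp p).right : ZMod p) = (u.1 : ZMod p) := by
        rw [mul_comm c (u.1 : ZMod p)] at h7
        exact mul_right_cancel₀ hc0 h7
      exact Units.ext h8
    -- the cocycle
    set d : ↥(Ul l p) → ZMod p :=
      fun u => Multiplicative.toAdd ((φ (sK l p u) : Flp l p) : Fgrp p).left with hddef
    have hcoc : ∀ u v : ↥(Ul l p), d (u * v) = d u + (u.1 : ZMod p) * d v := by
      intro u v
      have h := map_mul φ (sK l p u) (sK l p v)
      rw [sK_mul] at h
      have h9 := congrArg (fun k : Flp l p => Multiplicative.toAdd (k : Fgrp p).left) h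
      simp only [hddef] at h9 ⊢
      rw [h9]
      show Multiplicative.toAdd ((_ * _ : Flp l p) : Fgrp p).left = _
      rw [MulMemClass.coe_mul, mul_left, hsr u, phiF_apply, toAdd_mul, toAdd_ofAdd]
    -- averaging
    set m : ℕ := Fintype.card ↥(Ul l p) with hmdef
    set S : ZMod p := ∑ v : ↥(Ul l p), d v with hSdef
    have key : ∀ u : ↥(Ul l p), (m : ZMod p) * d u = (1 - (u.1 : ZMod p)) * S := by
      intro u
      have h1 : ∑ v : ↥(Ul l p), d (u * v) = S := by
        rw [hSdef]
        exact Fintype.sum_equiv (Equiv.mulLeft u) _ _ (fun v => rfl)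
      have h2 : ∑ v : ↥(Ul l p), d (u * v)
          = (m : ZMod p) * d u + (u.1 : ZMod p) * S := by
        simp only [hcoc]
        rw [Finset.sum_add_distrib, Finset.sum_const, ← Finset.mul_sum]
        simp [hmdef, hSdef, nsmul_eq_mul, mul_comm]
      rw [h1] at h2
      linear_combination -h2
    have hm0 : (m : ZMod p) ≠ 0 := by
      rw [Ne, ZMod.natCast_eq_zero_iff]
      intro hdvd
      have hmdvd : m ∣ p - 1 := by
        have h10 := Subgroup.card_subgroup_dvd_card (Ul l p)
        rwa [Nat.card_eq_fintype_card, Nat.card_eq_fintype_card, hcard, ← hmdef] at h10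
      have h11 := Nat.le_of_dvd (by have := hp.two_le; omega) (hdvd.trans hmdvd)
      have := hp.two_le; omega
    set T : ZMod p := ((m : ZMod p))⁻¹ * S with hTdef
    have hd : ∀ u : ↥(Ul l p), d u = (1 - (u.1 : ZMod p)) * T := by
      intro u
      have hk := key u
      field_simp [hTdef]
      have hmi : ((m : ZMod p))⁻¹ * (m : ZMod p) = 1 := inv_mul_cancel₀ hm0
      linear_combination ((m : ZMod p))⁻¹ * hk - d u * hmi
    -- the conjugating element
    refine ⟨(⟨ofAdd T, Units.mk0 c hc0⟩ : Fgrp p), ?_⟩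
    set g : Fgrp p := ⟨ofAdd T, Units.mk0 c hc0⟩ with hgdef
    have claim1 : ∀ y : ZMod p, MulAut.conjNormal g (tK l p y) = φ (tK l p y) := by
      intro y
      rw [htK]
      apply Subtype.ext
      rw [MulAut.conjNormal_apply]
      show g * inl (ofAdd y) * g⁻¹ = inl (ofAdd (c * y))
      rw [conj_inl, phiF_apply, toAdd_ofAdd]
      rfl
    have claim2 : ∀ u : ↥(Ul l p), MulAut.conjNormal g (sK l p u) = φ (sK l p u) := by
      intro u
      apply Subtype.ext
      rw [MulAut.conjNormal_apply]
      have hr : ((φ (sK l p u) : Flp l p) : Fgrp p) = inl (ofAdd (d u)) * inr u.1 := by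
        ext
        · simp only [mul_left, left_inl, right_inl, left_inr, map_one, MulAut.one_apply,
            mul_one]
          rw [show d u = Multiplicative.toAdd ((φ (sK l p u) : Flp l p) : Fgrp p).left
            from rfl, ofAdd_toAdd]
        · rw [hsr u]
          simp
      rw [hr, hd u]
      show g * inr u.1 * g⁻¹ = _
      ext
      · apply Multiplicative.toAdd.injective
        simp only [mul_left, inv_left, mul_right, inv_right, left_inl, right_inl, left_inr,
          right_inr, ← map_inv, phiF_apply, toAdd_mul, toAdd_inv, toAdd_ofAdd, toAdd_one,
          map_one, MulAut.one_apply, mul_one, one_mul, hgdef]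
        push_cast
        ring_nf
        field_simp
        ring
        rw [Units.val_mk0, mul_right_comm (T * c), mul_assoc T c, mul_inv_cancel₀ hc0, mul_one]
      · simp [hgdef]
    refine MulEquiv.ext fun k => ?_
    have hk := decomp l p k
    rw [hk, map_mul, map_mul, claim1, claim2]
end

section
/- With $E$ the group defined by the twisted multiplication on $\mathbb{F}_p \times \mathbb{F}_p \times \mathbb{F}_p^\times \times \mathbb{F}_p^\times \times \mathbb{F}_p^\times$, the maps $\eta: \mathbb{F}_p^\times \to E$, $\mu \mapsto (0,0,1,1,\mu)$, and $\phi: E \to F \times F$, $(x,y,\lambda^m,\lambda^n,\mu) \mapsto ((x,\lambda^m),(y,\lambda^n))$, form a short exact sequence $1 \to \mathbb{F}_p^\times \xrightarrow{\eta} E \xrightarrow{\phi} F \times F \to 1$, with $\eta(\mathbb{F}_p^\times)$ central in $E$. -/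
/-- The underlying set of the group `E`: tuples `(x, y, λ^m, λ^n, μ)` with
`x, y ∈ 𝔽_p`, exponents `m, n` recorded in `ℤ/(p-1) ≅ 𝔽_p^×` (via the fixed
generator `λ`), and `μ ∈ 𝔽_p^×`. -/
abbrev Ecar (p : ℕ) : Type :=
  ZMod p × ZMod p × ZMod (p - 1) × ZMod (p - 1) × (ZMod p)ˣ

/-- The multiplication of `E`:
`(x₁,y₁,λ^{m₁},λ^{n₁},μ₁)·(x₂,y₂,λ^{m₂},λ^{n₂},μ₂)
  = (x₁+λ^{m₁}x₂, y₁+λ^{n₁}y₂, λ^{m₁+m₂}, λ^{n₁+n₂}, μ₁μ₂λ^{n₁m₂})`. -/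
def Emul (p : ℕ) (lam : (ZMod p)ˣ) (a b : Ecar p) : Ecar p :=
  (a.1 + ((lam ^ (a.2.2.1).val : (ZMod p)ˣ) : ZMod p) * b.1,
   a.2.1 + ((lam ^ (a.2.2.2.1).val : (ZMod p)ˣ) : ZMod p) * b.2.1,
   a.2.2.1 + b.2.2.1,
   a.2.2.2.1 + b.2.2.2.1,
   a.2.2.2.2 * b.2.2.2.2 * lam ^ ((a.2.2.2.1).val * (b.2.2.1).val))

/-- The identity element `(0,0,λ⁰,λ⁰,1)` of `E`. -/
def Eone (p : ℕ) : Ecar p := (0, 0, 0, 0, 1)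

/-- The map `η : 𝔽_p^× → E`, `μ ↦ (0,0,1,1,μ)`. -/
def etaE (p : ℕ) (mu : (ZMod p)ˣ) : Ecar p := (0, 0, 0, 0, mu)

/-- The map `φ : E → F × F`, `(x,y,λ^m,λ^n,μ) ↦ ((x,λ^m),(y,λ^n))`. -/
def phiE (p : ℕ) (lam : (ZMod p)ˣ) (g : Ecar p) : Fgrp p × Fgrp p :=
  (⟨Multiplicative.ofAdd g.1, lam ^ (g.2.2.1).val⟩,
   ⟨Multiplicative.ofAdd g.2.1, lam ^ (g.2.2.2.1).val⟩)

/-!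
Write `λ^m` for `lam ^ m.val` with `m : ZMod (p - 1)`. Since `λ^(p-1) = 1`, this exponential
is additive in `m`, which makes `φ` multiplicative; since `λ` generates `𝔽_p^×`, it is a
bijection `ZMod (p - 1) ≃ 𝔽_p^×`, which gives surjectivity of `φ` and identifies its kernel with
the last coordinate. Centrality of `η` is the commutativity of `𝔽_p^×`, as the twist
`λ^{n₁ m₂}` vanishes when either factor has zero exponents.
-/

section PowVal

variable {G : Type*} {n : ℕ}

theorem pow_val_add_of_pow_eq_one [Monoid G] [NeZero n] {g : G} (hg : g ^ n = 1)
    (a b : ZMod n) : g ^ (a + b).val = g ^ a.val * g ^ b.val := by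
  rw [ZMod.val_add, ← pow_eq_pow_mod _ hg, pow_add]

theorem pow_val_eq_one_iff_of_orderOf_eq [Monoid G] [NeZero n] {g : G} (hg : orderOf g = n)
    (m : ZMod n) : g ^ m.val = 1 ↔ m = 0 := by
  rw [← orderOf_dvd_iff_pow_eq_one, hg, ← ZMod.natCast_eq_zero_iff, ZMod.natCast_zmod_val]

theorem exists_pow_val_eq_of_orderOf_eq [Group G] [NeZero n] {g u : G} (hg : orderOf g = n)
    (hu : u ∈ Subgroup.zpowers g) : ∃ m : ZMod n, g ^ m.val = u := by
  have hfin : IsOfFinOrder g := orderOf_pos_iff.mp (hg ▸ NeZero.pos n)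
  obtain ⟨k, rfl⟩ := hfin.mem_powers_iff_mem_zpowers.mpr hu
  exact ⟨k, by rw [ZMod.val_natCast, ← hg, ← pow_eq_pow_mod _ (pow_orderOf_eq_one g)]⟩

end PowVal

theorem orderOf_eq_sub_one_of_forall_mem_zpowers {p : ℕ} [Fact p.Prime] {lam : (ZMod p)ˣ}
    (hlam : ∀ u : (ZMod p)ˣ, u ∈ Subgroup.zpowers lam) : orderOf lam = p - 1 := by
  rw [orderOf_eq_card_of_forall_mem_zpowers hlam, Nat.card_eq_fintype_card,
    ZMod.card_units_eq_totient, Nat.totient_prime Fact.out]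

instance neZero_sub_one_of_prime {p : ℕ} [Fact p.Prime] : NeZero (p - 1) :=
  ⟨(Nat.sub_pos_of_lt (Fact.out : p.Prime).one_lt).ne'⟩

section Extension

variable {p : ℕ} {lam : (ZMod p)ˣ}

theorem etaE_mul (mu₁ mu₂ : (ZMod p)ˣ) :
    etaE p (mu₁ * mu₂) = Emul p lam (etaE p mu₁) (etaE p mu₂) := by
  simp [etaE, Emul]

theorem etaE_injective : Function.Injective (etaE p) := fun _ _ h => by
  simpa [etaE, Prod.ext_iff] using h

theorem Emul_etaE_comm (mu : (ZMod p)ˣ) (g : Ecar p) :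
    Emul p lam (etaE p mu) g = Emul p lam g (etaE p mu) := by
  simp [etaE, Emul, mul_comm]

variable [Fact p.Prime]

theorem phiE_Emul (a b : Ecar p) :
    phiE p lam (Emul p lam a b) = phiE p lam a * phiE p lam b :=
  have hpow := pow_val_add_of_pow_eq_one (ZMod.units_pow_card_sub_one_eq_one p lam)
  Prod.ext (SemidirectProduct.ext rfl (hpow _ _)) (SemidirectProduct.ext rfl (hpow _ _))

theorem phiE_surjective (hlam : ∀ u : (ZMod p)ˣ, u ∈ Subgroup.zpowers lam) :
    Function.Surjective (phiE p lam) := by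
  have hord := orderOf_eq_sub_one_of_forall_mem_zpowers hlam
  rintro ⟨⟨x, u⟩, ⟨y, v⟩⟩
  obtain ⟨m, hm⟩ := exists_pow_val_eq_of_orderOf_eq hord (hlam u)
  obtain ⟨n, hn⟩ := exists_pow_val_eq_of_orderOf_eq hord (hlam v)
  exact ⟨(x.toAdd, y.toAdd, m, n, 1),
    Prod.ext (SemidirectProduct.ext rfl hm) (SemidirectProduct.ext rfl hn)⟩

theorem phiE_eq_one_iff (hlam : ∀ u : (ZMod p)ˣ, u ∈ Subgroup.zpowers lam) (g : Ecar p) :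
    phiE p lam g = 1 ↔ ∃ mu : (ZMod p)ˣ, g = etaE p mu := by
  have hone := pow_val_eq_one_iff_of_orderOf_eq (orderOf_eq_sub_one_of_forall_mem_zpowers hlam)
  obtain ⟨x, y, m, n, u⟩ := g
  simp only [phiE, etaE, Prod.ext_iff, SemidirectProduct.ext_iff, Prod.fst_one, Prod.snd_one,
    SemidirectProduct.one_left, SemidirectProduct.one_right, hone]
  tauto

end Extension

/-- With `E` the group defined by the twisted multiplication on
`𝔽_p × 𝔽_p × 𝔽_p^× × 𝔽_p^× × 𝔽_p^×` (generator `λ` of `𝔽_p^×` fixed), the maps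
`η : μ ↦ (0,0,1,1,μ)` and `φ : (x,y,λ^m,λ^n,μ) ↦ ((x,λ^m),(y,λ^n))` form a
short exact sequence `1 → 𝔽_p^× → E → F × F → 1`, with `η(𝔽_p^×)` central in
`E`: `η` and `φ` are multiplicative, `η` is injective, `φ` is surjective, the
image of `η` is exactly the kernel of `φ`, and the image of `η` is central. -/
theorem stmt_8 (p : ℕ) (hp : p.Prime)
    (lam : (ZMod p)ˣ) (hlam : ∀ u : (ZMod p)ˣ, u ∈ Subgroup.zpowers lam) :
    (∀ mu₁ mu₂ : (ZMod p)ˣ,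
        etaE p (mu₁ * mu₂) = Emul p lam (etaE p mu₁) (etaE p mu₂)) ∧
    Function.Injective (etaE p) ∧
    (∀ a b : Ecar p,
        phiE p lam (Emul p lam a b) = phiE p lam a * phiE p lam b) ∧
    Function.Surjective (phiE p lam) ∧
    (∀ g : Ecar p, phiE p lam g = 1 ↔ ∃ mu : (ZMod p)ˣ, g = etaE p mu) ∧
    (∀ (mu : (ZMod p)ˣ) (g : Ecar p),
        Emul p lam (etaE p mu) g = Emul p lam g (etaE p mu)) := by
  have : Fact p.Prime := ⟨hp⟩
  exact ⟨etaE_mul, etaE_injective, phiE_Emul, phiE_surjective hlam, phiE_eq_one_iff hlam,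
    Emul_etaE_comm⟩
end

section
/- In the group $E$ (central extension of $F \times F$ by $Z = \mathbb{F}_p^\times$), for lifts $\widetilde{(x,\lambda^m)}$ of $((x,\lambda^m),1)$ and $\widetilde{(y,\lambda^n)}$ of $(1,(y,\lambda^n))$, the commutator satisfies $[\widetilde{(x,\lambda^m)}, \widetilde{(y,\lambda^n)}] = \lambda^{-mn} \in Z$, independent of the choice of lifts. -/
section

variable {p : ℕ} (lam : (ZMod p)ˣ)

theorem Emul_etaE (a : Ecar p) (z : (ZMod p)ˣ) :
    Emul p lam a (etaE p z) = (a.1, a.2.1, a.2.2.1, a.2.2.2.1, a.2.2.2.2 * z) := by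
  simp [Emul, etaE]

theorem Emul_leftLift_rightLift (x y : ZMod p) (m n : ZMod (p - 1)) (mu nu : (ZMod p)ˣ) :
    Emul p lam (x, 0, m, 0, mu) (0, y, 0, n, nu) = (x, y, m, n, mu * nu) := by
  simp [Emul]

theorem Emul_rightLift_leftLift (x y : ZMod p) (m n : ZMod (p - 1)) (mu nu : (ZMod p)ˣ) :
    Emul p lam (0, y, 0, n, nu) (x, 0, m, 0, mu)
      = (x, y, m, n, nu * mu * lam ^ (n.val * m.val)) := by
  simp [Emul]

end

theorem stmt_9_general (p : ℕ)
    (lam : (ZMod p)ˣ)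
    (x y : ZMod p) (m n : ZMod (p - 1)) (mu nu : (ZMod p)ˣ)
    (g h : Ecar p)
    (hg : g = (x, 0, m, 0, mu)) (hh : h = (0, y, 0, n, nu)) :
    Emul p lam g h
      = Emul p lam (Emul p lam h g) (etaE p (lam ^ (m.val * n.val))⁻¹) := by
  subst hg hh
  -- The cocycle `λ^{n₁m₂}` is trivial in `g·h` but equals `λ^{nm}` in `h·g`.
  rw [Emul_leftLift_rightLift, Emul_rightLift_leftLift, Emul_etaE, Nat.mul_comm n.val,
    mul_inv_cancel_right, mul_comm nu]

/-- In the group `E` (central extension of `F × F` by `Z = 𝔽_p^×`), any lift of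
`((x,λ^m), 1)` has the form `g = (x, 0, λ^m, λ⁰, μ)` and any lift of
`(1, (y,λ^n))` has the form `h = (0, y, λ⁰, λ^n, ν)`; the commutator
`[g,h] = g⁻¹h⁻¹gh` equals `λ^{-mn} ∈ Z`, independently of the choices of the
lifts (i.e. of `μ` and `ν`).  Equivalently, `g·h = (h·g)·η(λ^{mn})⁻¹`. -/
theorem stmt_9 (p : ℕ) (hp : p.Prime)
    (lam : (ZMod p)ˣ) (hlam : ∀ u : (ZMod p)ˣ, u ∈ Subgroup.zpowers lam)
    (x y : ZMod p) (m n : ZMod (p - 1)) (mu nu : (ZMod p)ˣ)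
    (g h : Ecar p)
    (hg : g = (x, 0, m, 0, mu)) (hh : h = (0, y, 0, n, nu)) :
    Emul p lam g h
      = Emul p lam (Emul p lam h g) (etaE p (lam ^ (m.val * n.val))⁻¹) :=
  stmt_9_general p lam x y m n mu nu g h hg hh
end

section
/- Let $a = v_l(p-1)$ and let $E_{l'} = \{(x,y,\lambda^m,\lambda^n,\lambda^r) \in E : m,n,r \in l^a\mathbb{N}_0\}$ and $Z_{l'} = E_{l'} \cap Z$, the subgroup of $Z \cong \mathbb{F}_p^\times$ generated by $\lambda^{l^a}$. Then $Z_{l'} \leq [E_{l'}, E_{l'}]$; in particular, any one-dimensional representation of $E_{l'}$ over a field restricts trivially to $Z_{l'}$. -/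
/-- `E_{l'} = {(x,y,λ^m,λ^n,λ^r) : m,n,r ∈ l^a ℕ₀}`: the exponents of the
three `𝔽_p^×`-coordinates are multiples of `l^a`. -/
def Elp (p : ℕ) (lam : (ZMod p)ˣ) (la : ℕ) : Set (Ecar p) :=
  {g | g.2.2.1 ∈ AddSubgroup.zmultiples ((la : ℤ) : ZMod (p - 1)) ∧
       g.2.2.2.1 ∈ AddSubgroup.zmultiples ((la : ℤ) : ZMod (p - 1)) ∧
       g.2.2.2.2 ∈ Subgroup.zpowers (lam ^ la)}

lemma aux_zpow_congr {G : Type*} [Group G] (g : G) (n : ℕ) (h1 : g ^ n = 1)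
    {x y : ℤ} (h : (n : ℤ) ∣ x - y) : g ^ x = g ^ y := by
  obtain ⟨q, hq⟩ := h
  have hx : x = y + n * q := by linarith
  rw [hx, zpow_add, zpow_mul, zpow_natCast, h1, one_zpow, mul_one]

lemma aux_val_dvd (n : ℕ) [NeZero n] (r : ℤ) :
    (n : ℤ) ∣ (((r : ZMod n).val : ℤ) - r) := by
  have h : ((((r : ZMod n).val : ℤ) - r : ℤ) : ZMod n) = 0 := by
    push_cast
    simp [ZMod.natCast_val, ZMod.cast_id]
  exact (ZMod.intCast_zmod_eq_zero_iff_dvd _ _).1 h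


/-- Let `l ≠ p` be primes with `p - 1` not a power of `l` and `a = v_l(p-1)`, and
let `λ` generate `𝔽_p^×`.  Let
`E_{l'} = {(x,y,λ^m,λ^n,λ^r) ∈ E : m,n,r ∈ l^a ℕ₀}` and
`Z_{l'} = ⟨λ^{l^a}⟩ ≤ Z = 𝔽_p^×` (a subgroup of order `(p-1)/l^a`).  Then
`Z_{l'} ≤ [E_{l'}, E_{l'}]`: indeed every `z ∈ Z_{l'}` satisfies
`η z ∈ E_{l'}` and is a commutator `[g,h]` of elements `g, h ∈ E_{l'}`
(expressed as `g·h = (h·g)·η z`).  In particular, any one-dimensional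
representation of `E_{l'}` over a field restricts trivially to `Z_{l'}`. -/
theorem stmt_10 (l p : ℕ) (hl : l.Prime) (hp : p.Prime) (hlp : l ≠ p)
    (hpow : ¬ ∃ k : ℕ, p - 1 = l ^ k)
    (a : ℕ) (ha : a = (p - 1).factorization l)
    (lam : (ZMod p)ˣ) (hlam : ∀ u : (ZMod p)ˣ, u ∈ Subgroup.zpowers lam) :
    (∀ z : (ZMod p)ˣ, z ∈ Subgroup.zpowers (lam ^ l ^ a) →
      etaE p z ∈ Elp p lam (l ^ a) ∧
      ∃ g ∈ Elp p lam (l ^ a), ∃ h ∈ Elp p lam (l ^ a),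
        Emul p lam g h = Emul p lam (Emul p lam h g) (etaE p z)) ∧
    (∀ (K : Type) [Field K] (rho : Ecar p → Kˣ),
      (∀ g h : Ecar p, g ∈ Elp p lam (l ^ a) → h ∈ Elp p lam (l ^ a) →
        rho (Emul p lam g h) = rho g * rho h) →
      ∀ z : (ZMod p)ˣ, z ∈ Subgroup.zpowers (lam ^ l ^ a) →
        rho (etaE p z) = 1) := by
  haveI : Fact p.Prime := ⟨hp⟩
  have hp2 : 2 ≤ p := hp.two_le
  haveI : NeZero (p - 1) := ⟨by omega⟩
  set la := l ^ a with hla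
  have h1 : lam ^ (p - 1) = 1 := ZMod.units_pow_card_sub_one_eq_one p lam
  have hcong : ∀ {x y : ℤ}, ((p - 1 : ℕ) : ℤ) ∣ x - y → lam ^ x = lam ^ y :=
    fun hxy => aux_zpow_congr lam (p - 1) h1 hxy
  have hne : p - 1 ≠ 0 := by omega
  have hdvd : la ∣ p - 1 := by rw [hla, ha]; exact Nat.ordProj_dvd (p - 1) l
  set d := (p - 1) / la with hdd
  have hd : la * d = p - 1 := Nat.mul_div_cancel' hdvd
  have hnd : ¬ l ∣ d := by
    rw [hdd, hla, ha]
    exact Nat.not_dvd_ordCompl hl hne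
  have hcop : Nat.Coprime la d := ((Nat.Prime.coprime_iff_not_dvd hl).2 hnd).pow_left a
  obtain ⟨u, v, huv⟩ : IsCoprime (la : ℤ) (d : ℤ) := Nat.isCoprime_iff_coprime.mpr hcop
  have hdZ : (la : ℤ) * d = ((p - 1 : ℕ) : ℤ) := by exact_mod_cast hd
  -- closure of Elp under Emul
  have hclosed : ∀ g ∈ Elp p lam la, ∀ h ∈ Elp p lam la, Emul p lam g h ∈ Elp p lam la := by
    intro g hg h hh
    obtain ⟨hm1, hn1, hmu1⟩ := hg
    obtain ⟨hm2, hn2, hmu2⟩ := hh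
    set n1 := g.2.2.2.1 with hn1d
    set m2 := h.2.2.1 with hm2d
    refine ⟨AddSubgroup.add_mem _ hm1 hm2, AddSubgroup.add_mem _ hn1 hn2, ?_⟩
    refine Subgroup.mul_mem _ (Subgroup.mul_mem _ hmu1 hmu2) ?_
    obtain ⟨s, hs⟩ := AddSubgroup.mem_zmultiples_iff.1 hn1
    refine Subgroup.mem_zpowers_iff.2 ⟨s * m2.val, ?_⟩
    have hsv : ((p - 1 : ℕ) : ℤ) ∣ ((n1.val : ℤ) - s * la) := by
      have hv : n1 = ((s * la : ℤ) : ZMod (p - 1)) := by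
        rw [← hs]; push_cast [zsmul_eq_mul]; ring
      rw [hv]
      simpa using aux_val_dvd (p - 1) (s * la)
    calc (lam ^ la) ^ (s * (m2.val : ℤ)) = lam ^ ((la : ℤ) * (s * m2.val)) := by
          rw [← zpow_natCast lam la, ← zpow_mul]
      _ = lam ^ (((n1.val : ℤ)) * (m2.val : ℤ)) := by
          refine hcong ?_
          obtain ⟨q, hq⟩ := hsv
          exact ⟨-q * m2.val, by linear_combination (-(m2.val : ℤ)) * hq⟩
      _ = lam ^ (n1.val * m2.val) := by
          rw [← zpow_natCast lam (n1.val * m2.val)]; push_cast; ring_nf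
  -- main part
  have main : ∀ z : (ZMod p)ˣ, z ∈ Subgroup.zpowers (lam ^ la) →
      etaE p z ∈ Elp p lam la ∧
      ∃ g ∈ Elp p lam la, ∃ h ∈ Elp p lam la,
        Emul p lam g h = Emul p lam (Emul p lam h g) (etaE p z) := by
    intro z hz
    obtain ⟨k, hk⟩ := Subgroup.mem_zpowers_iff.1 hz
    have hzel : etaE p z ∈ Elp p lam la :=
      ⟨AddSubgroup.zero_mem _, AddSubgroup.zero_mem _, hz⟩
    refine ⟨hzel, ?_⟩
    set c : ℤ := -(k * u) with hc
    set M : ZMod (p - 1) := ((c * la : ℤ) : ZMod (p - 1)) with hM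
    set N : ZMod (p - 1) := ((la : ℤ) : ZMod (p - 1)) with hN
    refine ⟨((0 : ZMod p), (0 : ZMod p), M, (0 : ZMod (p - 1)), (1 : (ZMod p)ˣ)), ?_,
            ((0 : ZMod p), (0 : ZMod p), (0 : ZMod (p - 1)), N, (1 : (ZMod p)ˣ)), ?_, ?_⟩
    · exact ⟨⟨c, by rw [hM]; push_cast [zsmul_eq_mul]; ring⟩,
             AddSubgroup.zero_mem _, Subgroup.one_mem _⟩
    · exact ⟨AddSubgroup.zero_mem _, ⟨1, by rw [hN]; push_cast [zsmul_eq_mul]; ring⟩,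
             Subgroup.one_mem _⟩
    · have key : (1 : (ZMod p)ˣ) = lam ^ (N.val * M.val) * z := by
        have e1 : lam ^ (N.val * M.val) = lam ^ (((N.val : ℤ)) * (M.val : ℤ)) := by
          rw [← zpow_natCast lam (N.val * M.val)]; push_cast; ring_nf
        have dN : ((p - 1 : ℕ) : ℤ) ∣ ((N.val : ℤ) - la) := by
          simpa [hN] using aux_val_dvd (p - 1) (la : ℤ)
        have dM : ((p - 1 : ℕ) : ℤ) ∣ ((M.val : ℤ) - c * la) := by
          simpa [hM] using aux_val_dvd (p - 1) (c * la)
        have e2 : lam ^ (((N.val : ℤ)) * (M.val : ℤ)) = lam ^ ((la : ℤ) * (c * la)) := by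
          refine hcong ?_
          obtain ⟨q1, hq1⟩ := dN
          obtain ⟨q2, hq2⟩ := dM
          exact ⟨(N.val : ℤ) * q2 + (c * la) * q1, by
            linear_combination (N.val : ℤ) * hq2 + (c * (la : ℤ)) * hq1⟩
        have e3 : z = lam ^ ((la : ℤ) * k) := by
          rw [← hk, ← zpow_natCast lam la, ← zpow_mul]
        rw [e1, e2, e3, ← zpow_add]
        have : lam ^ ((0 : ℤ)) = lam ^ ((la : ℤ) * (c * la) + (la : ℤ) * k) := by
          refine hcong ?_
          exact ⟨-(k * v), by linear_combination (-(k : ℤ) * v) * hdZ + ((la : ℤ) * k) * huv⟩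
        rw [← this, zpow_zero]
      simp only [Emul, etaE]
      refine Prod.ext ?_ (Prod.ext ?_ (Prod.ext ?_ (Prod.ext ?_ ?_)))
      · simp
      · simp
      · simp
      · simp
      · show (1 : (ZMod p)ˣ) * 1 * lam ^ (ZMod.val (0 : ZMod (p-1)) * ZMod.val (0 : ZMod (p-1)))
            = 1 * 1 * lam ^ (N.val * M.val) * z * lam ^ ((N + 0).val * ZMod.val (0 : ZMod (p-1)))
        rw [ZMod.val_zero]
        simpa using key
  refine ⟨main, ?_⟩
  intro K _ rho hrho z hz
  obtain ⟨hη, g, hg, h, hh, heq⟩ := main z hz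
  have e1 := hrho g h hg hh
  have e2 := hrho (Emul p lam h g) (etaE p z) (hclosed h hh g hg) hη
  have e3 := hrho h g hh hg
  rw [heq, e2, e3, mul_comm (rho h) (rho g), mul_assoc] at e1
  have e4 := mul_left_cancel e1
  exact mul_eq_left.mp e4
end

section
/- Let $t_1 \neq t_2$ be natural numbers and $D = D_{t_1} \times D_{t_2}$. Then every automorphism of $D$ normalizing the image of $F_{1,l'} \times F_{2,l'}$ in $\mathrm{Aut}(D)$ leaves each factor $D_{t_1}$ and $D_{t_2}$ invariant; the factors $D_{t_i}$ can be characterized as the nontrivial centralizers in $D$ of nontrivial $p$-elements of $F_{1,l'} \times F_{2,l'}$. -/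
/-!
The translations `x ↦ x + a` of the two index lines are the `p`-elements of
`F_{1,l'} × F_{2,l'}`. As `p` is invertible modulo `l ^ t`, a zero-sum tuple invariant under a
nontrivial translation is constant, hence zero; so the fixed subgroup of the translation by
`(a₁, a₂)` is `D`, `D_{t₁}`, `D_{t₂}` or `0` according to which `aᵢ` vanish. An automorphism `ζ`
normalising the image conjugates a translation `τ` to some affine map `(b, u)`; since `τ ^ p = 1`
while `(b, u) ^ p` has linear part `u ^ p = u`, and an affine map with linear part `u ≠ 1` moves
some zero-sum tuple, `u = 1`. Thus `ζ` maps the fixed subgroups of translations onto each other;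
`D_{t₁}` can go neither to `D` nor to `0`, and not to `D_{t₂}` either, because the exponents
`l ^ t₁ ≠ l ^ t₂` differ.
-/

/-- The action of an element `((c₁,u₁),(c₂,u₂)) ∈ F₁ × F₂` (affine maps of the
line over `𝔽_p`) on the ambient group
`Ω_{t₁} × Ω_{t₂} = (ZMod p → ZMod (l^t₁)) × (ZMod p → ZMod (l^t₂))`,
permuting indices via the affine action `(c,u)·x = c + u·x`. -/
def affAct (l p t₁ t₂ : ℕ) (c₁ c₂ : ZMod p) (u₁ u₂ : (ZMod p)ˣ)
    (g : (ZMod p → ZMod (l ^ t₁)) × (ZMod p → ZMod (l ^ t₂))) :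
    (ZMod p → ZMod (l ^ t₁)) × (ZMod p → ZMod (l ^ t₂)) :=
  (fun x => g.1 (((u₁⁻¹ : (ZMod p)ˣ) : ZMod p) * (x - c₁)),
   fun x => g.2 (((u₂⁻¹ : (ZMod p)ˣ) : ZMod p) * (x - c₂)))

theorem exists_sum_eq_zero_comp_ne {α M : Type*} [Fintype α] [DecidableEq α]
    [AddCommGroup M] {θ : α → α} (hθ : θ.Injective) {x₀ y : α} (hx₀ : θ x₀ = x₀)
    (hy : θ y ≠ y) {m : M} (hm : m ≠ 0) : ∃ f : α → M, ∑ x, f x = 0 ∧ f ∘ θ ≠ f := by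
  have hyx₀ : θ y ≠ x₀ := fun h => hy (by rw [hθ (h.trans hx₀.symm), hx₀])
  refine ⟨Pi.single (θ y) m - Pi.single x₀ m, by simp, fun h => hm ?_⟩
  have := congrFun h y
  have hyx₀' : y ≠ x₀ := fun h => hy (h ▸ hx₀)
  simpa [Pi.single_apply, hy.symm, hyx₀, hyx₀'] using this

namespace ZMod

variable {p : ℕ}

theorem sum_comp_affine [NeZero p] {M : Type*} [AddCommMonoid M] (c : ZMod p) (u : (ZMod p)ˣ)
    (f : ZMod p → M) : ∑ x, f (((u⁻¹ : (ZMod p)ˣ) : ZMod p) * (x - c)) = ∑ x, f x :=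
  Equiv.sum_comp ((Equiv.subRight c).trans (Units.mulLeft u⁻¹)) f

theorem comp_sub_eq_self_iff [Fact p.Prime] {n : ℕ} (hpn : p.Coprime n)
    {f : ZMod p → ZMod n} (hf : ∑ x, f x = 0) {c : ZMod p} :
    (fun x => f (x - c)) = f ↔ (c ≠ 0 → f = 0) := by
  refine ⟨fun hfix hc => ?_, fun h => ?_⟩
  · have hper : Function.Periodic f (-c) := fun x => by rw [← sub_eq_add_neg, congrFun hfix]
    have hconst : ∀ x, f x = f 0 := fun x => by
      have := hper.nsmul (x * (-c)⁻¹).val 0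
      rwa [nsmul_eq_mul, natCast_val, cast_id', id, mul_assoc,
        inv_mul_cancel₀ (neg_ne_zero.2 hc), mul_one, zero_add] at this
    have hp0 : (p : ZMod n) * f 0 = 0 := by
      simpa [hconst, Finset.sum_const, nsmul_eq_mul] using hf
    funext x
    rw [hconst, Pi.zero_apply, ← (isUnit_iff_coprime p n |>.2 hpn).mul_right_eq_zero, hp0]
  · by_cases hc : c = 0
    · simp [hc]
    · simp [h hc, Pi.zero_def]

theorem exists_sum_eq_zero_comp_affine_ne [Fact p.Prime] {M : Type*} [AddCommGroup M]
    (c : ZMod p) {u : (ZMod p)ˣ} (hu : u ≠ 1) {m : M} (hm : m ≠ 0) :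
    ∃ f : ZMod p → M, ∑ x, f x = 0 ∧
      (fun x => f (((u⁻¹ : (ZMod p)ˣ) : ZMod p) * (x - c))) ≠ f := by
  have hw : (u : ZMod p) ≠ 1 := Units.val_eq_one.not.2 hu
  have hw1 : (u : ZMod p)⁻¹ ≠ 1 := fun h => hw (inv_eq_one.1 h)
  -- `x ↦ u⁻¹ (x - c)` is a homothety of ratio `u⁻¹ ≠ 1` about `x₀ = c / (1 - u)`
  set x₀ := c / (1 - (u : ZMod p))
  have hθ : ∀ x, ((u⁻¹ : (ZMod p)ˣ) : ZMod p) * (x - c) = x₀ + (u⁻¹ : ZMod p) * (x - x₀) := by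
    intro x
    have hc : c = x₀ * (1 - u) := (div_mul_cancel₀ c (sub_ne_zero.2 hw.symm)).symm
    rw [hc, Units.val_inv_eq_inv_val]
    field_simp
    ring
  refine exists_sum_eq_zero_comp_ne (x₀ := x₀) (y := x₀ + 1)
    (fun x y h => sub_left_injective ((Units.mul_right_inj _).1 h)) ?_ ?_ hm
  · rw [hθ, sub_self, mul_zero, add_zero]
  · rw [hθ, add_sub_cancel_left, mul_one]
    exact fun h => hw1 (add_left_cancel h)

end ZMod

theorem Set.MapsTo.apply_eq_self_iff_of_conj {α : Type*} {s : Set α} {σ τ : α → α}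
    (hσ : Set.MapsTo σ s s) (ζ : s → s) (hζ : ζ.Injective)
    (hconj : ∀ g h : s, σ g = h → τ (ζ g) = ζ h) (g : s) :
    σ g = g ↔ τ (ζ g) = ζ g := by
  refine ⟨hconj g g, fun h => ?_⟩
  have h' := hconj g ⟨σ g, hσ g.2⟩ rfl
  rw [h] at h'
  exact congrArg Subtype.val (hζ (Subtype.ext h')).symm

theorem AddSubgroup.exponent_eq_of_map_eq_one {G : Type*} [AddGroup G] {n : ℕ}
    {H : AddSubgroup G} (hH : ∀ g ∈ H, n • g = 0) (φ : G →+ ZMod n) {g : G} (hg : g ∈ H)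
    (hφ : φ g = 1) : AddMonoid.exponent H = n := by
  refine Nat.dvd_antisymm
    (AddMonoid.exponent_dvd_of_forall_nsmul_eq_zero fun x => Subtype.ext (hH x x.2)) ?_
  have h := congrArg (φ ∘ Subtype.val) (AddMonoid.exponent_nsmul_eq_zero (⟨g, hg⟩ : H))
  simp only [Function.comp_apply, AddSubgroup.coe_nsmul, map_nsmul, hφ, nsmul_eq_mul, mul_one,
    ZeroMemClass.coe_zero, map_zero] at h
  exact (ZMod.natCast_eq_zero_iff _ _).1 h

theorem AddEquiv.apply_mem_of_forall_mem_iff {G : Type*} [AddGroup G] (ζ : G ≃+ G)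
    {A B : AddSubgroup G} (hAB : A ⊓ B = ⊥) (hA : A ≠ ⊥) (hB : B ≠ ⊥)
    (hexp : AddMonoid.exponent A ≠ AddMonoid.exponent B) {β₁ β₂ : Prop}
    (h : ∀ g, g ∈ A ↔ (β₁ → ζ g ∈ B) ∧ (β₂ → ζ g ∈ A)) {g : G} (hg : g ∈ A) : ζ g ∈ A := by
  by_cases h₁ : β₁ <;> by_cases h₂ : β₂ <;>
    simp only [h₁, h₂, true_imp_iff, false_imp_iff, true_and, and_true] at h
  · refine absurd (eq_bot_iff.2 fun x hx => ?_) hA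
    have hζx : ζ x ∈ A ⊓ B := ⟨((h x).1 hx).2, ((h x).1 hx).1⟩
    rwa [hAB, AddSubgroup.mem_bot, map_eq_zero_iff _ ζ.injective, ← AddSubgroup.mem_bot] at hζx
  · refine absurd ?_ hexp
    have hmap : A.map (ζ : G →+ G) = B := by
      ext y
      obtain ⟨x, rfl⟩ := ζ.surjective y
      rw [← h]
      exact AddSubgroup.mem_map_iff_mem ζ.injective
    rw [← hmap]
    exact AddMonoid.exponent_eq_of_addEquiv (ζ.addSubgroupMap A)
  · exact (h g).1 hg
  · exact absurd (eq_bot_iff.2 fun x hx => hAB ▸ ⟨(h x).2 trivial, hx⟩) hB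

section affAct

variable {l p t₁ t₂ : ℕ}

theorem affAct_affAct (c₁ c₂ d₁ d₂ : ZMod p) (u₁ u₂ v₁ v₂ : (ZMod p)ˣ)
    (g : (ZMod p → ZMod (l ^ t₁)) × (ZMod p → ZMod (l ^ t₂))) :
    affAct l p t₁ t₂ c₁ c₂ u₁ u₂ (affAct l p t₁ t₂ d₁ d₂ v₁ v₂ g) =
      affAct l p t₁ t₂ (c₁ + u₁ * d₁) (c₂ + u₂ * d₂) (u₁ * v₁) (u₂ * v₂) g := by
  have h₁ := u₁.inv_mul
  have h₂ := u₂.inv_mul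
  ext x <;> simp only [affAct, mul_inv_rev, Units.val_mul] <;> refine congrArg _ ?_
  · linear_combination ((v₁⁻¹ : (ZMod p)ˣ) * d₁ : ZMod p) * h₁
  · linear_combination ((v₂⁻¹ : (ZMod p)ˣ) * d₂ : ZMod p) * h₂

theorem affAct_zero_zero_one_one :
    affAct l p t₁ t₂ 0 0 1 1 = id := by
  funext g
  simp [affAct]

theorem iterate_affAct_one_one (c₁ c₂ : ZMod p) (k : ℕ) :
    (affAct l p t₁ t₂ c₁ c₂ 1 1)^[k] = affAct l p t₁ t₂ (k • c₁) (k • c₂) 1 1 := by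
  induction k with
  | zero => simp [affAct_zero_zero_one_one]
  | succ k ih =>
    funext g
    rw [Function.iterate_succ_apply', ih, affAct_affAct]
    simp only [Units.val_one, one_mul, ← succ_nsmul']

theorem exists_iterate_affAct (c₁ c₂ : ZMod p) (u₁ u₂ : (ZMod p)ˣ) (k : ℕ) :
    ∃ d₁ d₂ : ZMod p,
      (affAct l p t₁ t₂ c₁ c₂ u₁ u₂)^[k] = affAct l p t₁ t₂ d₁ d₂ (u₁ ^ k) (u₂ ^ k) := by
  induction k with
  | zero => exact ⟨0, 0, by simp [affAct_zero_zero_one_one]⟩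
  | succ k ih =>
    obtain ⟨d₁, d₂, hd⟩ := ih
    refine ⟨c₁ + u₁ * d₁, c₂ + u₂ * d₂, funext fun g => ?_⟩
    rw [Function.iterate_succ_apply', hd, affAct_affAct, pow_succ', pow_succ']

theorem affAct_one_one_eq_self_iff [Fact p.Prime] (hp₁ : p.Coprime (l ^ t₁))
    (hp₂ : p.Coprime (l ^ t₂)) {c₁ c₂ : ZMod p}
    {g : (ZMod p → ZMod (l ^ t₁)) × (ZMod p → ZMod (l ^ t₂))}
    (hg : ∑ x, g.1 x = 0 ∧ ∑ x, g.2 x = 0) :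
    affAct l p t₁ t₂ c₁ c₂ 1 1 g = g ↔ (c₁ ≠ 0 → g.1 = 0) ∧ (c₂ ≠ 0 → g.2 = 0) := by
  simp only [affAct, inv_one, Units.val_one, one_mul, Prod.ext_iff,
    ← ZMod.comp_sub_eq_self_iff hp₁ hg.1, ← ZMod.comp_sub_eq_self_iff hp₂ hg.2]

variable [NeZero p] {D : AddSubgroup ((ZMod p → ZMod (l ^ t₁)) × (ZMod p → ZMod (l ^ t₂)))}

theorem affAct_mapsTo (hD : ∀ g, g ∈ D ↔ (∑ x, g.1 x = 0 ∧ ∑ x, g.2 x = 0))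
    (c₁ c₂ : ZMod p) (u₁ u₂ : (ZMod p)ˣ) : Set.MapsTo (affAct l p t₁ t₂ c₁ c₂ u₁ u₂) D D := by
  intro g hg
  rw [SetLike.mem_coe, hD] at hg ⊢
  exact ⟨(ZMod.sum_comp_affine c₁ u₁ g.1).trans hg.1, (ZMod.sum_comp_affine c₂ u₂ g.2).trans hg.2⟩

theorem units_eq_one_of_forall_affAct_eq_self [Fact p.Prime] [Nontrivial (ZMod (l ^ t₁))]
    [Nontrivial (ZMod (l ^ t₂))] (hD : ∀ g, g ∈ D ↔ (∑ x, g.1 x = 0 ∧ ∑ x, g.2 x = 0))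
    {c₁ c₂ : ZMod p} {u₁ u₂ : (ZMod p)ˣ} (hfix : ∀ g ∈ D, affAct l p t₁ t₂ c₁ c₂ u₁ u₂ g = g) :
    u₁ = 1 ∧ u₂ = 1 := by
  constructor <;> by_contra hu
  · obtain ⟨f, hf, hmoved⟩ :=
      ZMod.exists_sum_eq_zero_comp_affine_ne (M := ZMod (l ^ t₁)) c₁ hu one_ne_zero
    exact hmoved (congrArg Prod.fst (hfix (f, 0) ((hD (f, 0)).2 ⟨hf, Finset.sum_const_zero⟩)))
  · obtain ⟨f, hf, hmoved⟩ :=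
      ZMod.exists_sum_eq_zero_comp_affine_ne (M := ZMod (l ^ t₂)) c₂ hu one_ne_zero
    exact hmoved (congrArg Prod.snd (hfix (0, f) ((hD (0, f)).2 ⟨Finset.sum_const_zero, hf⟩)))

theorem units_eq_one_of_conj_translation [Fact p.Prime] [Nontrivial (ZMod (l ^ t₁))]
    [Nontrivial (ZMod (l ^ t₂))] (hD : ∀ g, g ∈ D ↔ (∑ x, g.1 x = 0 ∧ ∑ x, g.2 x = 0))
    (ζ : D ≃+ D) {a₁ a₂ b₁ b₂ : ZMod p} {u₁ u₂ : (ZMod p)ˣ}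
    (hconj : ∀ g h : D, affAct l p t₁ t₂ a₁ a₂ 1 1 g = h →
      affAct l p t₁ t₂ b₁ b₂ u₁ u₂ (ζ g) = ζ h) :
    u₁ = 1 ∧ u₂ = 1 := by
  have hsemi : Function.Semiconj ζ (affAct_mapsTo hD a₁ a₂ 1 1).restrict
      (affAct_mapsTo hD b₁ b₂ u₁ u₂).restrict := fun g => Subtype.ext (hconj g _ rfl).symm
  obtain ⟨d₁, d₂, hd⟩ := exists_iterate_affAct (l := l) (t₁ := t₁) (t₂ := t₂) b₁ b₂ u₁ u₂ p
  have hσ : (affAct_mapsTo hD a₁ a₂ 1 1).restrict^[p] = id := by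
    funext g
    apply Subtype.ext
    rw [Set.MapsTo.coe_iterate_restrict, iterate_affAct_one_one]
    simp [affAct_zero_zero_one_one]
  -- the `p`-th power of the conjugate is trivial on `D` and has the same linear part
  have hpow : ∀ u : (ZMod p)ˣ, u ^ p = u := fun u => Units.ext (by push_cast; exact ZMod.pow_card _)
  rw [hpow, hpow] at hd
  refine units_eq_one_of_forall_affAct_eq_self hD (c₁ := d₁) (c₂ := d₂) fun g hg => ?_
  obtain ⟨g', hg'⟩ := ζ.surjective ⟨g, hg⟩
  have := congrArg Subtype.val (hsemi.iterate_right p g')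
  rw [hσ, id, hg', Set.MapsTo.coe_iterate_restrict, hd] at this
  exact this.symm

theorem exponent_ker_snd_comp_subtype [Nontrivial (ZMod p)]
    (hD : ∀ g, g ∈ D ↔ (∑ x, g.1 x = 0 ∧ ∑ x, g.2 x = 0)) :
    AddMonoid.exponent ((AddMonoidHom.snd _ _).comp D.subtype).ker = l ^ t₁ := by
  refine AddSubgroup.exponent_eq_of_map_eq_one (fun g hg => ?_)
    ((Pi.evalAddMonoidHom _ 0).comp ((AddMonoidHom.fst _ _).comp D.subtype))
    (g := ⟨(Pi.single 0 1 - Pi.single 1 1, 0), (hD _).2 ⟨by simp, Finset.sum_const_zero⟩⟩)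
    rfl (by simp)
  have hg2 : g.val.2 = 0 := hg
  exact Subtype.ext (Prod.ext (ZModModule.char_nsmul_eq_zero _ _) (by simp [hg2]))

theorem exponent_ker_fst_comp_subtype [Nontrivial (ZMod p)]
    (hD : ∀ g, g ∈ D ↔ (∑ x, g.1 x = 0 ∧ ∑ x, g.2 x = 0)) :
    AddMonoid.exponent ((AddMonoidHom.fst _ _).comp D.subtype).ker = l ^ t₂ := by
  refine AddSubgroup.exponent_eq_of_map_eq_one (fun g hg => ?_)
    ((Pi.evalAddMonoidHom _ 0).comp ((AddMonoidHom.snd _ _).comp D.subtype))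
    (g := ⟨(0, Pi.single 0 1 - Pi.single 1 1), (hD _).2 ⟨Finset.sum_const_zero, by simp⟩⟩)
    rfl (by simp)
  have hg1 : g.val.1 = 0 := hg
  exact Subtype.ext (Prod.ext (by simp [hg1]) (ZModModule.char_nsmul_eq_zero _ _))

theorem factors_invariant_of_conj_translations (hl : 2 ≤ l) (ht : t₁ ≠ t₂) [Fact p.Prime]
    [Nontrivial (ZMod (l ^ t₁))] [Nontrivial (ZMod (l ^ t₂))]
    (hp₁ : p.Coprime (l ^ t₁)) (hp₂ : p.Coprime (l ^ t₂))
    (hD : ∀ g, g ∈ D ↔ (∑ x, g.1 x = 0 ∧ ∑ x, g.2 x = 0)) (ζ : D ≃+ D)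
    (hconj : ∀ a₁ a₂ : ZMod p, ∃ b₁ b₂ : ZMod p, ∀ g : D,
      affAct l p t₁ t₂ a₁ a₂ 1 1 g = g ↔ affAct l p t₁ t₂ b₁ b₂ 1 1 (ζ g) = ζ g) :
    (∀ g : D, g.val.2 = 0 → (ζ g).val.2 = 0) ∧ (∀ g : D, g.val.1 = 0 → (ζ g).val.1 = 0) := by
  set A : AddSubgroup D := ((AddMonoidHom.snd _ _).comp D.subtype).ker
  set B : AddSubgroup D := ((AddMonoidHom.fst _ _).comp D.subtype).ker
  have hfix : ∀ (c₁ c₂ : ZMod p) (g : D),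
      affAct l p t₁ t₂ c₁ c₂ 1 1 g = g ↔ (c₁ ≠ 0 → g ∈ B) ∧ (c₂ ≠ 0 → g ∈ A) :=
    fun _ _ g => affAct_one_one_eq_self_iff hp₁ hp₂ ((hD g).1 g.2)
  have hexpA : AddMonoid.exponent A = l ^ t₁ := exponent_ker_snd_comp_subtype hD
  have hexpB : AddMonoid.exponent B = l ^ t₂ := exponent_ker_fst_comp_subtype hD
  have hAB : A ⊓ B = ⊥ := eq_bot_iff.2 fun g hg => Subtype.ext (Prod.ext hg.2 hg.1)
  have hne_bot : ∀ H : AddSubgroup D, AddMonoid.exponent H ≠ 1 → H ≠ ⊥ := by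
    rintro H hH rfl
    exact hH AddMonoid.exp_eq_one_of_subsingleton
  have hA := hne_bot A (by rw [hexpA]; exact ZMod.nontrivial_iff.1 ‹_›)
  have hB := hne_bot B (by rw [hexpB]; exact ZMod.nontrivial_iff.1 ‹_›)
  have hexp : AddMonoid.exponent A ≠ AddMonoid.exponent B := by
    rw [hexpA, hexpB]
    exact fun h => ht (Nat.pow_right_injective hl h)
  obtain ⟨b₁, b₂, hb⟩ := hconj 0 1
  obtain ⟨b₁', b₂', hb'⟩ := hconj 1 0
  refine ⟨fun g hg => ζ.apply_mem_of_forall_mem_iff hAB hA hB hexp (β₁ := b₁ ≠ 0) (β₂ := b₂ ≠ 0)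
      (fun g => ?_) hg,
    fun g hg => ζ.apply_mem_of_forall_mem_iff (inf_comm A B ▸ hAB) hB hA hexp.symm
      (β₁ := b₂' ≠ 0) (β₂ := b₁' ≠ 0) (fun g => ?_) hg⟩
  · simpa using (hfix 0 1 g).symm.trans ((hb g).trans (hfix b₁ b₂ (ζ g)))
  · simpa [and_comm] using (hfix 1 0 g).symm.trans ((hb' g).trans (hfix b₁' b₂' (ζ g)))

end affAct

theorem stmt_17_general
    (l p t₁ t₂ : ℕ) (hl : l.Prime) (hp : p.Prime) [NeZero p] (hlp : l ≠ p)
    (ht₁ : 0 < t₁) (ht₂ : 0 < t₂) (ht : t₁ ≠ t₂)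
    (D : AddSubgroup ((ZMod p → ZMod (l ^ t₁)) × (ZMod p → ZMod (l ^ t₂))))
    (hD : ∀ g : (ZMod p → ZMod (l ^ t₁)) × (ZMod p → ZMod (l ^ t₂)),
        g ∈ D ↔ ((∑ x, g.1 x) = 0 ∧ (∑ x, g.2 x) = 0))
    (ζ : D ≃+ D)
    (hnorm : ∀ (c₁ c₂ : ZMod p) (u₁ u₂ : (ZMod p)ˣ),
      Nat.Coprime (orderOf u₁) l → Nat.Coprime (orderOf u₂) l →
      ∃ (c₁' c₂' : ZMod p) (u₁' u₂' : (ZMod p)ˣ),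
        Nat.Coprime (orderOf u₁') l ∧ Nat.Coprime (orderOf u₂') l ∧
        ∀ g h : D, affAct l p t₁ t₂ c₁ c₂ u₁ u₂ g.val = h.val →
          affAct l p t₁ t₂ c₁' c₂' u₁' u₂' (ζ g).val = (ζ h).val) :
    ((∀ g : D, g.val.2 = 0 → (ζ g).val.2 = 0) ∧
     (∀ g : D, g.val.1 = 0 → (ζ g).val.1 = 0)) ∧
    (∀ c₁ c₂ : ZMod p,
      (c₁ ≠ 0 → c₂ ≠ 0 →
        {g : D | affAct l p t₁ t₂ c₁ c₂ 1 1 g.val = g.val} = {0}) ∧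
      (c₁ ≠ 0 → c₂ = 0 →
        {g : D | affAct l p t₁ t₂ c₁ c₂ 1 1 g.val = g.val}
          = {g : D | g.val.1 = 0}) ∧
      (c₁ = 0 → c₂ ≠ 0 →
        {g : D | affAct l p t₁ t₂ c₁ c₂ 1 1 g.val = g.val}
          = {g : D | g.val.2 = 0})) := by
  have := Fact.mk hp
  have : Nontrivial (ZMod (l ^ t₁)) :=
    ZMod.nontrivial_iff.2 (Nat.one_lt_pow ht₁.ne' hl.one_lt).ne'
  have : Nontrivial (ZMod (l ^ t₂)) :=
    ZMod.nontrivial_iff.2 (Nat.one_lt_pow ht₂.ne' hl.one_lt).ne'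
  have hcop : ∀ t, p.Coprime (l ^ t) := fun t =>
    ((Nat.coprime_primes hp hl).2 hlp.symm).pow_right t
  have hconj : ∀ a₁ a₂ : ZMod p, ∃ b₁ b₂ : ZMod p, ∀ g : D,
      affAct l p t₁ t₂ a₁ a₂ 1 1 g = g ↔ affAct l p t₁ t₂ b₁ b₂ 1 1 (ζ g) = ζ g := by
    intro a₁ a₂
    obtain ⟨b₁, b₂, u₁, u₂, -, -, hrel⟩ := hnorm a₁ a₂ 1 1 (by simp) (by simp)
    obtain ⟨rfl, rfl⟩ := units_eq_one_of_conj_translation hD ζ hrel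
    exact ⟨b₁, b₂, (affAct_mapsTo hD a₁ a₂ 1 1).apply_eq_self_iff_of_conj ζ ζ.injective hrel⟩
  refine ⟨factors_invariant_of_conj_translations hl.two_le ht (hcop _) (hcop _) hD ζ hconj,
    fun c₁ c₂ => ?_⟩
  have hfix : ∀ g : D, affAct l p t₁ t₂ c₁ c₂ 1 1 g = g ↔
      (c₁ ≠ 0 → g.val.1 = 0) ∧ (c₂ ≠ 0 → g.val.2 = 0) :=
    fun g => affAct_one_one_eq_self_iff (hcop _) (hcop _) ((hD g).1 g.2)
  refine ⟨fun h₁ h₂ => ?_, fun h₁ h₂ => ?_, fun h₁ h₂ => ?_⟩ <;> ext g <;>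
    simp only [Set.mem_ofPred_eq, Set.mem_singleton_iff, hfix]
  · rw [← Subtype.val_inj, ZeroMemClass.coe_zero, Prod.ext_iff]
    simp [h₁, h₂]
  · simp [h₁, h₂]
  · simp [h₁, h₂]

/-- Let `l ≠ p` be primes with `p - 1` not a power of `l`, and `t₁ ≠ t₂` positive
integers.  Let `D = D_{t₁} × D_{t₂}` (pairs of tuples each summing to zero)
with `F_{1,l'} × F_{2,l'}` acting by affine permutations of indices (the units
`u₁, u₂` ranging over `O_{l'}(𝔽_p^×)`, i.e. of order coprime to `l`).  Then:
(1) every automorphism `ζ` of `D` normalising the image of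
`F_{1,l'} × F_{2,l'}` in `Aut(D)` leaves each factor `D_{t₁}` and `D_{t₂}`
invariant; and
(2) the factors are characterised as the nontrivial fixed-point sets
(centralisers) in `D` of nontrivial `p`-elements `(c₁, c₂)` of
`F_{1,l'} × F_{2,l'}`. -/
theorem stmt_17
    (l p t₁ t₂ : ℕ) (hl : l.Prime) (hp : p.Prime) [NeZero p] (hlp : l ≠ p)
    (ht₁ : 0 < t₁) (ht₂ : 0 < t₂) (ht : t₁ ≠ t₂)
    (hpow : ¬ ∃ k : ℕ, p - 1 = l ^ k)
    (D : AddSubgroup ((ZMod p → ZMod (l ^ t₁)) × (ZMod p → ZMod (l ^ t₂))))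
    (hD : ∀ g : (ZMod p → ZMod (l ^ t₁)) × (ZMod p → ZMod (l ^ t₂)),
        g ∈ D ↔ ((∑ x, g.1 x) = 0 ∧ (∑ x, g.2 x) = 0))
    (ζ : D ≃+ D)
    (hnorm : ∀ (c₁ c₂ : ZMod p) (u₁ u₂ : (ZMod p)ˣ),
      Nat.Coprime (orderOf u₁) l → Nat.Coprime (orderOf u₂) l →
      ∃ (c₁' c₂' : ZMod p) (u₁' u₂' : (ZMod p)ˣ),
        Nat.Coprime (orderOf u₁') l ∧ Nat.Coprime (orderOf u₂') l ∧
        ∀ g h : D, affAct l p t₁ t₂ c₁ c₂ u₁ u₂ g.val = h.val →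
          affAct l p t₁ t₂ c₁' c₂' u₁' u₂' (ζ g).val = (ζ h).val) :
    ((∀ g : D, g.val.2 = 0 → (ζ g).val.2 = 0) ∧
     (∀ g : D, g.val.1 = 0 → (ζ g).val.1 = 0)) ∧
    (∀ c₁ c₂ : ZMod p,
      (c₁ ≠ 0 → c₂ ≠ 0 →
        {g : D | affAct l p t₁ t₂ c₁ c₂ 1 1 g.val = g.val} = {0}) ∧
      (c₁ ≠ 0 → c₂ = 0 →
        {g : D | affAct l p t₁ t₂ c₁ c₂ 1 1 g.val = g.val}
          = {g : D | g.val.1 = 0}) ∧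
      (c₁ = 0 → c₂ ≠ 0 →
        {g : D | affAct l p t₁ t₂ c₁ c₂ 1 1 g.val = g.val}
          = {g : D | g.val.2 = 0})) :=
  stmt_17_general l p t₁ t₂ hl hp hlp ht₁ ht₂ ht D hD ζ hnorm
end
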